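/- Let μ < λ be infinite cardinals with λ > μ. There exist 2^λ pairwise μ-non-equivalent subtrees of ^{<ω}λ, each of cardinality λ and each μ-wide, provided there exists a single μ-strongly rigid subtree of ^{<ω}λ of cardinality λ in which the root has λ many immediate successors. -/

import Mathlib

universe u

/-- `S` is a subtree of `^{<ω}α`: a set of finite sequences closed under initial segments. -/
def IsSubtree {α : Type u} (S : Set (List α)) : Prop :=
  ∀ η ∈ S, ∀ ν : List α, ν <+: η → ν ∈ S

/-- The cone of proper extensions of `τ` inside `T`. -/
def Cone {α : Type u} (T : Set (List α)) (τ : List α) : Set (List α) :=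
  {η ∈ T | τ <+: η ∧ τ ≠ η}

/-- The tree `T` with the cones over `⋃_{ρ∈T} A^ρ` removed. -/
def Reduced {α : Type u} (T : Set (List α)) (Afam : List α → Set (List α)) :
    Set (List α) :=
  T \ ⋃ τ ∈ ⋃ ρ ∈ T, Afam ρ, Cone T τ

/-- `T₀` and `T₁` are `μ`-equivalent: after removing from each a union of cones indexed by
sets `A^ρ_i ⊆ (T_i)_ρ` of cardinality `< μ`, the remaining sets are isomorphic as partial
orders (under the initial-segment order). -/
def MuEquiv {α : Type u} (mu : Cardinal.{u}) (T0 T1 : Set (List α)) : Prop :=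
  ∃ A0 A1 : List α → Set (List α),
    (∀ ρ ∈ T0, A0 ρ ⊆ Cone T0 ρ ∧ Cardinal.mk (A0 ρ) < mu) ∧
    (∀ ρ ∈ T1, A1 ρ ⊆ Cone T1 ρ ∧ Cardinal.mk (A1 ρ) < mu) ∧
    ∃ e : Reduced T0 A0 ≃ Reduced T1 A1,
      ∀ x y : Reduced T0 A0, (x : List α) <+: (y : List α) ↔
        ((e x : List α)) <+: ((e y : List α))

/-- `T` is `μ`-wide: every node of `T` has at least `μ` immediate successors in `T`. -/
def MuWide {α : Type u} (mu : Cardinal.{u}) (T : Set (List α)) : Prop :=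
  ∀ η ∈ T, mu ≤ Cardinal.mk {ν ∈ T | η <+: ν ∧ ν.length = η.length + 1}

/-- The cone `T⁺_ν = {η ∈ T : ν ⊴ η}` of (not necessarily proper) extensions of `ν`. -/
def ConePlus {α : Type u} (T : Set (List α)) (ν : List α) : Set (List α) :=
  {η ∈ T | ν <+: η}

/-- `T` is `μ`-strongly rigid: `T` is `μ`-wide and for every `η` and `α₀ < α₁` with
`η⌢⟨α₀⟩, η⌢⟨α₁⟩ ∈ T`, the cones `T⁺_{η⌢⟨α₀⟩}` and `T⁺_{η⌢⟨α₁⟩}` are not `μ`-equivalent. -/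
def StronglyRigid {α : Type u} [LinearOrder α] (mu : Cardinal.{u}) (T : Set (List α)) :
    Prop :=
  MuWide mu T ∧ ∀ η : List α, ∀ a0 a1 : α, a0 < a1 →
    η ++ [a0] ∈ T → η ++ [a1] ∈ T →
    ¬ MuEquiv mu (ConePlus T (η ++ [a0])) (ConePlus T (η ++ [a1]))

/-!
Write `T_S` for the subtree of `T` made of the root and the cones `T⁺_{⟨a⟩}`, `a ∈ S`.
A `μ`-equivalence between `T_S` and `T_{S'}` is an isomorphism of trees after removals, so it
preserves levels and sends `⟨a⟩` to some `⟨b⟩`; for all but fewer than `μ` values of `a` neither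
node is removed at the root, and the isomorphism restricts to a `μ`-equivalence of
`T⁺_{⟨a⟩}` and `T⁺_{⟨b⟩}`. For `a ∈ S \ S'` we have `b ∈ S'`, so `b ≠ a` and rigidity is
violated: hence `|S \ S'| < μ`. It remains to pick `2^λ` sets of `λ` root successors any two of
which differ in `λ` places.
-/

namespace RigidTrees

open Cardinal

variable {X : Type u}

lemma eq_of_singleton_prefix {a b : X} {η : List X} (ha : [a] <+: η) (hb : [b] <+: η) :
    a = b := by
  simpa using (List.prefix_of_prefix_length_le ha hb le_rfl).eq_of_length rfl

lemma singleton_prefix_of_prefix {a : X} {τ η : List X} (ha : [a] <+: η) (hτ : τ <+: η)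
    (hτ_ne : τ ≠ []) : [a] <+: τ :=
  List.prefix_of_prefix_length_le ha hτ (List.length_pos_iff.mpr hτ_ne)

lemma nat_card_prefixes (l : List X) : Nat.card {ν // ν <+: l} = l.length + 1 := by
  refine (Nat.card_eq_of_bijective (fun k : Fin (l.length + 1) => ⟨l.take k, l.take_prefix k⟩)
    ⟨fun i j hij => ?_, fun ν => ?_⟩).symm.trans (Nat.card_fin _)
  · have := congrArg (List.length ∘ Subtype.val) hij
    simp only [Function.comp_apply, List.length_take] at this
    omega
  · exact ⟨⟨ν.1.length, Nat.lt_succ_of_le ν.2.length_le⟩,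
      Subtype.ext (List.prefix_iff_eq_take.mp ν.2).symm⟩

def IsPrefixEquiv {P Q : Set (List X)} (e : P ≃ Q) : Prop :=
  ∀ x y : P, (x : List X) <+: y ↔ (e x : List X) <+: e y

namespace IsPrefixEquiv

variable {P Q : Set (List X)} {e : P ≃ Q}

lemma symm (he : IsPrefixEquiv e) : IsPrefixEquiv e.symm := fun x y => by
  simpa using (he (e.symm x) (e.symm y)).symm

/-- In a tree the nodes below `η` form a chain of `η.length + 1` elements, so an isomorphism
of trees preserves the level of each node. -/
lemma length_eq (hP : IsSubtree P) (hQ : IsSubtree Q) (he : IsPrefixEquiv e) (x : P) :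
    (e x : List X).length = (x : List X).length := by
  have below : ∀ {P : Set (List X)}, IsSubtree P → ∀ x : P,
      Nat.card {y : P // (y : List X) <+: x} = (x : List X).length + 1 := fun hP x =>
    (Nat.card_congr (Equiv.subtypeSubtypeEquivSubtype fun h => hP _ x.2 _ h)).trans
      (nat_card_prefixes _)
  have := Nat.card_congr (e.subtypeEquiv (p := fun y : P => (y : List X) <+: x)
    (q := fun z : Q => (z : List X) <+: e x) fun y => he y x)
  rw [below hP, below hQ] at this
  omega

lemma exists_conePlus (he : IsPrefixEquiv e) (x : P) :
    ∃ f : ConePlus P x ≃ ConePlus Q (e x), IsPrefixEquiv f :=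
  ⟨(Equiv.subtypeSubtypeEquivSubtypeInter (· ∈ P) ((x : List X) <+: ·)).symm.trans
    ((e.subtypeEquiv fun y => he x y).trans
      (Equiv.subtypeSubtypeEquivSubtypeInter (· ∈ Q) ((e x : List X) <+: ·))),
    fun y z => he ⟨y, y.2.1⟩ ⟨z, z.2.1⟩⟩

end IsPrefixEquiv

lemma mem_reduced_iff {P : Set (List X)} {A : List X → Set (List X)} {η : List X} :
    η ∈ Reduced P A ↔ η ∈ P ∧ ∀ ρ ∈ P, ∀ τ ∈ A ρ, τ <+: η → τ = η := by
  simp only [Reduced, Cone, Set.mem_sdiff, Set.mem_iUnion, Set.mem_ofPred_eq, not_exists,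
    not_and, exists_prop]
  constructor
  · rintro ⟨hη, h⟩
    exact ⟨hη, fun ρ hρ τ hτ hτη => by_contra (h τ ⟨ρ, hρ, hτ⟩ hη hτη)⟩
  · rintro ⟨hη, h⟩
    exact ⟨hη, fun τ ⟨ρ, hρ, hτ⟩ _ hτη => not_not.mpr (h ρ hρ τ hτ hτη)⟩

lemma isSubtree_reduced {P : Set (List X)} (hP : IsSubtree P) (A : List X → Set (List X)) :
    IsSubtree (Reduced P A) := by
  intro η hη ν hνη
  rw [mem_reduced_iff] at hη ⊢
  refine ⟨hP η hη.1 ν hνη, fun ρ hρ τ hτ hτν => ?_⟩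
  have hτη : τ = η := hη.2 ρ hρ τ hτ (hτν.trans hνη)
  subst hτη
  exact hτν.eq_of_length (le_antisymm hτν.length_le hνη.length_le)

lemma mem_reduced_of_length_le_one {P : Set (List X)} {A : List X → Set (List X)}
    (hA : ∀ ρ ∈ P, A ρ ⊆ Cone P ρ) {η : List X} (hη : η ∈ P) (hlen : η.length ≤ 1) :
    η ∈ Reduced P A := by
  refine mem_reduced_iff.mpr ⟨hη, fun ρ hρ τ hτ hτη => hτη.eq_of_length ?_⟩
  obtain ⟨-, hρτ, hρτ_ne⟩ := hA ρ hρ hτ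
  have : τ ≠ [] := by rintro rfl; exact hρτ_ne (List.prefix_nil.mp hρτ)
  have := List.length_pos_iff.mpr this
  have := hτη.length_le
  omega

lemma MuEquiv.refl {mu : Cardinal.{u}} (hmu : mu ≠ 0) (T : Set (List X)) : MuEquiv mu T T :=
  ⟨fun _ => ∅, fun _ => ∅, fun _ _ => ⟨Set.empty_subset _, by simpa [pos_iff_ne_zero]⟩,
    fun _ _ => ⟨Set.empty_subset _, by simpa [pos_iff_ne_zero]⟩, Equiv.refl _,
    fun _ _ => Iff.rfl⟩

lemma MuEquiv.symm {mu : Cardinal.{u}} {T0 T1 : Set (List X)} (h : MuEquiv mu T0 T1) :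
    MuEquiv mu T1 T0 := by
  obtain ⟨A0, A1, hA0, hA1, e, he⟩ := h
  exact ⟨A1, A0, hA1, hA0, e.symm, IsPrefixEquiv.symm he⟩

lemma StronglyRigid.not_muEquiv_singleton [LinearOrder X] {mu : Cardinal.{u}}
    {T : Set (List X)} (hT : StronglyRigid mu T) {a b : X} (hab : a ≠ b) (ha : [a] ∈ T)
    (hb : [b] ∈ T) : ¬ MuEquiv mu (ConePlus T [a]) (ConePlus T [b]) := by
  rcases hab.lt_or_gt with hlt | hlt
  · exact hT.2 [] a b hlt ha hb
  · exact fun h => hT.2 [] b a hlt hb ha (MuEquiv.symm h)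

/-- The removals of `A` seen from the cone `P⁺_{⟨a⟩}`: cones that `A` removes at the root
above `⟨a⟩` are now removed at `⟨a⟩`, the root of the cone. -/
def coneFamily (A : List X → Set (List X)) (a : X) (ρ : List X) : Set (List X) :=
  A ρ ∪ {τ ∈ A [] | ρ = [a] ∧ [a] <+: τ}

lemma coneFamily_valid {mu : Cardinal.{u}} (hmu : ℵ₀ ≤ mu) {P : Set (List X)}
    {A : List X → Set (List X)} (hA : ∀ ρ ∈ P, A ρ ⊆ Cone P ρ ∧ #(A ρ) < mu)
    (hnil : [] ∈ P) {a : X} (ha : [a] ∉ A []) :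
    ∀ ρ ∈ ConePlus P [a], coneFamily A a ρ ⊆ Cone (ConePlus P [a]) ρ ∧
      #(coneFamily A a ρ) < mu := by
  intro ρ hρ
  refine ⟨?_, (mk_union_le _ _).trans_lt (add_lt_of_lt hmu (hA ρ hρ.1).2
    ((mk_le_mk_of_subset (Set.sep_subset _ _)).trans_lt (hA [] hnil).2))⟩
  rintro τ (hτ | ⟨hτ, rfl, haτ⟩)
  · obtain ⟨hτP, hρτ, hρτ_ne⟩ := (hA ρ hρ.1).1 hτ
    exact ⟨⟨hτP, hρ.2.trans hρτ⟩, hρτ, hρτ_ne⟩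
  · exact ⟨⟨((hA [] hnil).1 hτ).1, haτ⟩, haτ, fun h => ha (h ▸ hτ)⟩

lemma reduced_conePlus_coneFamily {P : Set (List X)} {A : List X → Set (List X)}
    (hA : ∀ ρ ∈ P, A ρ ⊆ Cone P ρ) (hnil : [] ∈ P) {a : X} (ha : [a] ∈ P) :
    Reduced (ConePlus P [a]) (coneFamily A a) = ConePlus (Reduced P A) [a] := by
  ext η
  simp only [ConePlus, Set.mem_ofPred_eq, mem_reduced_iff, coneFamily, Set.mem_union]
  constructor
  · rintro ⟨⟨hη, haη⟩, h⟩
    refine ⟨⟨hη, fun ρ hρ τ hτ hτη => ?_⟩, haη⟩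
    obtain ⟨-, hρτ, hρτ_ne⟩ := hA ρ hρ hτ
    rcases eq_or_ne ρ [] with rfl | hρ_ne
    · have hτ_ne : τ ≠ [] := fun h => hρτ_ne h.symm
      exact h [a] ⟨ha, List.prefix_rfl⟩ τ
        (Or.inr ⟨hτ, rfl, singleton_prefix_of_prefix haη hτη hτ_ne⟩) hτη
    · exact h ρ ⟨hρ, singleton_prefix_of_prefix haη (hρτ.trans hτη) hρ_ne⟩ τ (Or.inl hτ) hτη
  · rintro ⟨⟨hη, h⟩, haη⟩
    refine ⟨⟨hη, haη⟩, ?_⟩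
    rintro ρ ⟨hρ, -⟩ τ (hτ | ⟨hτ, -⟩)
    · exact h ρ hρ τ hτ
    · exact h [] hnil τ hτ

lemma muEquiv_conePlus_of_prefixEquiv {mu : Cardinal.{u}} (hmu : ℵ₀ ≤ mu)
    {P0 P1 : Set (List X)} {A0 A1 : List X → Set (List X)}
    (hA0 : ∀ ρ ∈ P0, A0 ρ ⊆ Cone P0 ρ ∧ #(A0 ρ) < mu)
    (hA1 : ∀ ρ ∈ P1, A1 ρ ⊆ Cone P1 ρ ∧ #(A1 ρ) < mu) (hP0 : [] ∈ P0) (hP1 : [] ∈ P1)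
    {a b : X} (ha : [a] ∈ P0) (hb : [b] ∈ P1) (ha' : [a] ∉ A0 []) (hb' : [b] ∉ A1 [])
    (f : ConePlus (Reduced P0 A0) [a] ≃ ConePlus (Reduced P1 A1) [b]) (hf : IsPrefixEquiv f) :
    MuEquiv mu (ConePlus P0 [a]) (ConePlus P1 [b]) := by
  refine ⟨coneFamily A0 a, coneFamily A1 b, coneFamily_valid hmu hA0 hP0 ha',
    coneFamily_valid hmu hA1 hP1 hb', ?_⟩
  rw [reduced_conePlus_coneFamily (fun ρ hρ => (hA0 ρ hρ).1) hP0 ha,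
    reduced_conePlus_coneFamily (fun ρ hρ => (hA1 ρ hρ).1) hP1 hb]
  exact ⟨f, hf⟩

lemma IsPrefixEquiv.exists_muEquiv_conePlus {mu : Cardinal.{u}} (hmu : ℵ₀ ≤ mu)
    {P0 P1 : Set (List X)} (hP0 : IsSubtree P0) (hP1 : IsSubtree P1)
    {A0 A1 : List X → Set (List X)} (hA0 : ∀ ρ ∈ P0, A0 ρ ⊆ Cone P0 ρ ∧ #(A0 ρ) < mu)
    (hA1 : ∀ ρ ∈ P1, A1 ρ ⊆ Cone P1 ρ ∧ #(A1 ρ) < mu) {e : Reduced P0 A0 ≃ Reduced P1 A1}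
    (he : IsPrefixEquiv e) {a : X} (ha : [a] ∈ Reduced P0 A0) (ha0 : [a] ∉ A0 [])
    (ha1 : (e ⟨[a], ha⟩ : List X) ∉ A1 []) :
    ∃ b, (e ⟨[a], ha⟩ : List X) = [b] ∧ MuEquiv mu (ConePlus P0 [a]) (ConePlus P1 [b]) := by
  obtain ⟨b, hb⟩ := List.length_eq_one_iff.mp <|
    he.length_eq (isSubtree_reduced hP0 A0) (isSubtree_reduced hP1 A1) ⟨[a], ha⟩
  have haP0 : [a] ∈ P0 := (mem_reduced_iff.mp ha).1
  have hbP1 : [b] ∈ P1 := hb ▸ (mem_reduced_iff.mp (e ⟨[a], ha⟩).2).1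
  have hcone := he.exists_conePlus ⟨[a], ha⟩
  rw [hb] at hcone
  obtain ⟨f, hf⟩ := hcone
  exact ⟨b, hb, muEquiv_conePlus_of_prefixEquiv hmu hA0 hA1 (hP0 _ haP0 [] List.nil_prefix)
    (hP1 _ hbP1 [] List.nil_prefix) haP0 hbP1 ha0 (hb ▸ ha1) f hf⟩

/-- The subtree `T_S = {⟨⟩} ∪ ⋃_{a ∈ S} T⁺_{⟨a⟩}` of `T`. -/
def rootRestrict (T : Set (List X)) (S : Set X) : Set (List X) :=
  {η ∈ T | ∀ a, [a] <+: η → a ∈ S}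

section rootRestrict

variable {T : Set (List X)} {S : Set X}

lemma rootRestrict_subset : rootRestrict T S ⊆ T := fun _ h => h.1

lemma isSubtree_rootRestrict (hT : IsSubtree T) : IsSubtree (rootRestrict T S) :=
  fun _ hη ν hνη => ⟨hT _ hη.1 ν hνη, fun a haν => hη.2 a (haν.trans hνη)⟩

lemma nil_mem_rootRestrict (hT : [] ∈ T) : [] ∈ rootRestrict T S :=
  ⟨hT, fun _ h => absurd (List.prefix_nil.mp h) (List.cons_ne_nil _ _)⟩

lemma mem_rootRestrict_of_singleton_prefix {a : X} (ha : a ∈ S) {η : List X} (hη : η ∈ T)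
    (haη : [a] <+: η) : η ∈ rootRestrict T S :=
  ⟨hη, fun _ hbη => eq_of_singleton_prefix haη hbη ▸ ha⟩

lemma singleton_mem_rootRestrict {a : X} : [a] ∈ rootRestrict T S ↔ [a] ∈ T ∧ a ∈ S :=
  ⟨fun h => ⟨h.1, h.2 a List.prefix_rfl⟩,
    fun h => mem_rootRestrict_of_singleton_prefix h.2 h.1 List.prefix_rfl⟩

lemma conePlus_rootRestrict {a : X} (ha : a ∈ S) :
    ConePlus (rootRestrict T S) [a] = ConePlus T [a] :=
  Set.ext fun _ => ⟨fun h => ⟨h.1.1, h.2⟩,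
    fun h => ⟨mem_rootRestrict_of_singleton_prefix ha h.1 h.2, h.2⟩⟩

lemma mk_le_mk_rootRestrict (hS : ∀ a ∈ S, [a] ∈ T) : #S ≤ #(rootRestrict T S) :=
  mk_le_of_injective (f := fun a : S => ⟨[a.1], singleton_mem_rootRestrict.mpr ⟨hS a a.2, a.2⟩⟩)
    fun _ _ h => Subtype.ext (List.singleton_injective (congrArg Subtype.val h))

lemma muWide_rootRestrict {mu : Cardinal.{u}} (hT : MuWide mu T) (hS : ∀ a ∈ S, [a] ∈ T)
    (hmu : mu ≤ #S) : MuWide mu (rootRestrict T S) := by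
  rintro (_ | ⟨c, t⟩) hη
  · refine hmu.trans (mk_le_of_injective (f := fun a : S => ⟨[a.1],
      singleton_mem_rootRestrict.mpr ⟨hS a a.2, a.2⟩, List.nil_prefix, rfl⟩) ?_)
    exact fun _ _ h => Subtype.ext (List.singleton_injective (congrArg Subtype.val h))
  · refine (hT _ hη.1).trans (mk_le_mk_of_subset fun ν ⟨hν, hην, hlen⟩ => ⟨?_, hην, hlen⟩)
    exact mem_rootRestrict_of_singleton_prefix (hη.2 c ⟨t, rfl⟩) hν
      ((List.prefix_append [c] t).trans hην)

end rootRestrict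

theorem mk_sdiff_lt_of_muEquiv_rootRestrict {mu : Cardinal.{u}} (hmu : ℵ₀ ≤ mu)
    {T : Set (List X)} (hT : IsSubtree T)
    (hrig : ∀ a b : X, a ≠ b → [a] ∈ T → [b] ∈ T →
      ¬ MuEquiv mu (ConePlus T [a]) (ConePlus T [b]))
    {S S' : Set X} (hS : ∀ a ∈ S, [a] ∈ T)
    (h : MuEquiv mu (rootRestrict T S) (rootRestrict T S')) : #(S \ S' : Set X) < mu := by
  obtain ⟨A0, A1, hA0, hA1, e, he : IsPrefixEquiv e⟩ := h
  rcases S.eq_empty_or_nonempty with rfl | ⟨a₀, ha₀⟩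
  · simpa using aleph0_pos.trans_le hmu
  have hnil : [] ∈ T := hT _ (hS a₀ ha₀) [] List.nil_prefix
  have hnil0 : [] ∈ rootRestrict T S := nil_mem_rootRestrict hnil
  have hnil1 : [] ∈ rootRestrict T S' := nil_mem_rootRestrict hnil
  let B0 : Set X := {a | [a] ∈ A0 []}
  let B1 : Set X :=
    {a | ∃ h : [a] ∈ Reduced (rootRestrict T S) A0, (e ⟨[a], h⟩ : List X) ∈ A1 []}
  have hB0 : #B0 < mu := (mk_le_of_injective (f := fun a : B0 => (⟨[a.1], a.2⟩ : A0 []))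
    fun _ _ h => Subtype.ext (List.singleton_injective (congrArg Subtype.val h))).trans_lt
      (hA0 [] hnil0).2
  have hB1 : #B1 < mu := (mk_le_of_injective
    (f := fun a : B1 => (⟨(e ⟨[a.1], a.2.fst⟩ : List X), a.2.snd⟩ : A1 []))
    fun x y h => by
      have : (e ⟨[x.1], x.2.fst⟩ : List X) = e ⟨[y.1], y.2.fst⟩ :=
        congrArg (Subtype.val : A1 [] → List X) h
      exact Subtype.ext (List.singleton_injective
        (congrArg Subtype.val (e.injective (Subtype.ext this))))).trans_lt
      (hA1 [] hnil1).2
  refine (mk_le_mk_of_subset (fun a ha => ?_ : S \ S' ⊆ B0 ∪ B1)).trans_lt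
    ((mk_union_le B0 B1).trans_lt (add_lt_of_lt hmu hB0 hB1))
  obtain ⟨haS, haS'⟩ := ha
  by_contra hbad
  obtain ⟨haB0, haB1⟩ := not_or.mp hbad
  have ha : [a] ∈ Reduced (rootRestrict T S) A0 := mem_reduced_of_length_le_one
    (fun ρ hρ => (hA0 ρ hρ).1) (singleton_mem_rootRestrict.mpr ⟨hS a haS, haS⟩) le_rfl
  obtain ⟨b, hb, hequiv⟩ := he.exists_muEquiv_conePlus hmu (isSubtree_rootRestrict hT)
    (isSubtree_rootRestrict hT) hA0 hA1 ha haB0 fun h => haB1 ⟨ha, h⟩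
  obtain ⟨hbT, hbS'⟩ := singleton_mem_rootRestrict.mp
    (hb ▸ (mem_reduced_iff.mp (e ⟨[a], ha⟩).2).1 : [b] ∈ rootRestrict T S')
  rw [conePlus_rootRestrict haS, conePlus_rootRestrict hbS'] at hequiv
  exact hrig a b (fun hab => haS' (hab ▸ hbS')) (hS a haS) hbT hequiv

lemma mk_setOf_singleton_mem (T : Set (List X)) :
    #{c | [c] ∈ T} = #{ν ∈ T | ν.length = 1} := by
  rw [← mk_image_eq List.singleton_injective]
  congr
  ext ν
  constructor
  · rintro ⟨c, hc, rfl⟩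
    exact ⟨hc, rfl⟩
  · rintro ⟨hν, hlen⟩
    obtain ⟨c, rfl⟩ := List.length_eq_one_iff.mp hlen
    exact ⟨c, hν, rfl⟩

/-- Split `R` into blocks `B_∅` and `B_i` (`i ∈ ι`) of size `#ι` and let `S Y = B_∅ ∪ ⋃_{i∈Y} B_i`;
then `S Y \ S Y'` contains a whole block as soon as `Y ⊄ Y'`. -/
lemma exists_family_le_mk_sdiff {ι α : Type u} (hι : ℵ₀ ≤ #ι) (R : Set α) (hR : #ι ≤ #R) :
    ∃ S : Set ι → Set α, (∀ Y, S Y ⊆ R) ∧ (∀ Y, #ι ≤ #(S Y)) ∧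
      ∀ Y Y', ¬ Y ⊆ Y' → #ι ≤ #(S Y \ S Y' : Set α) := by
  obtain ⟨j⟩ : Nonempty (Option ι × ι ↪ R) := by
    rw [← le_def]
    simpa [mk_option, add_one_eq hι, mul_eq_self hι] using hR
  refine ⟨fun Y => (fun p => (j p : α)) '' {p | ∀ i ∈ p.1, i ∈ Y}, fun Y => ?_, fun Y => ?_,
    fun Y Y' hY => ?_⟩
  · rintro _ ⟨p, -, rfl⟩
    exact (j p).2
  · exact mk_le_of_injective (f := fun x => ⟨j (none, x), (none, x), by simp, rfl⟩)
      fun x y h => by simpa [Subtype.coe_inj] using congrArg Subtype.val h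
  · obtain ⟨i, hiY, hiY'⟩ := Set.not_subset.mp hY
    refine mk_le_of_injective (f := fun x => ⟨j (some i, x), ⟨(some i, x), by simpa, rfl⟩, ?_⟩)
      fun x y h => by simpa [Subtype.coe_inj] using congrArg Subtype.val h
    rintro ⟨p, hp, hpj⟩
    obtain rfl := j.injective (Subtype.ext hpj)
    exact hiY' (hp i rfl)

end RigidTrees

open RigidTrees Cardinal

/-- If there is a single `μ`-strongly rigid subtree of `^{<ω}λ` of cardinality `λ` whose
root has `λ` many immediate successors, then there are `2^λ` pairwise `μ`-non-equivalent
subtrees of `^{<ω}λ`, each of cardinality `λ` and each `μ`-wide. -/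
theorem stmt7 (mu lam : Cardinal.{u}) (hmu : Cardinal.aleph0 ≤ mu) (hml : mu < lam)
    (T : Set (List lam.ord.ToType)) (hT : IsSubtree T)
    (hrig : StronglyRigid mu T) (hcard : Cardinal.mk T = lam)
    (hroot : Cardinal.mk {ν ∈ T | ν.length = 1} = lam) :
    ∃ F : Set (Set (List lam.ord.ToType)),
      Cardinal.mk F = 2 ^ lam ∧
      (∀ T' ∈ F, IsSubtree T' ∧ Cardinal.mk T' = lam ∧ MuWide mu T') ∧
      (∀ T0 ∈ F, ∀ T1 ∈ F, T0 ≠ T1 → ¬ MuEquiv mu T0 T1) := by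
  have hL : #lam.ord.ToType = lam := mk_ord_toType lam
  have hR : #{c : lam.ord.ToType | [c] ∈ T} = lam := (mk_setOf_singleton_mem T).trans hroot
  obtain ⟨S, hSR, hS, hSdiff⟩ := exists_family_le_mk_sdiff (hL ▸ hmu.trans hml.le)
    {c | [c] ∈ T} (by rw [hL, hR])
  rw [hL] at hS hSdiff
  have hne : ∀ Y Y', Y ≠ Y' → ¬ MuEquiv mu (rootRestrict T (S Y)) (rootRestrict T (S Y')) := by
    have key : ∀ Y Y', ¬ Y ⊆ Y' → ¬ MuEquiv mu (rootRestrict T (S Y)) (rootRestrict T (S Y')) :=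
      fun Y Y' hY h => (hml.trans_le (hSdiff Y Y' hY)).not_ge
        (mk_sdiff_lt_of_muEquiv_rootRestrict hmu hT (fun a b => hrig.not_muEquiv_singleton)
          (hSR Y) h).le
    intro Y Y' hY
    by_cases hYY' : Y ⊆ Y'
    · exact fun h => key Y' Y (fun h' => hY (hYY'.antisymm h')) h.symm
    · exact key Y Y' hYY'
  have hinj : Function.Injective fun Y => rootRestrict T (S Y) := fun Y Y' h =>
    by_contra fun hY => hne Y Y' hY <| (congrArg (MuEquiv mu (rootRestrict T (S Y))) h).mp
      (MuEquiv.refl (aleph0_pos.trans_le hmu).ne' _)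
  refine ⟨Set.range fun Y => rootRestrict T (S Y), ?_, ?_, ?_⟩
  · rw [mk_range_eq _ hinj, mk_set, hL]
  · rintro _ ⟨Y, rfl⟩
    exact ⟨isSubtree_rootRestrict hT,
      ((mk_le_mk_of_subset rootRestrict_subset).trans hcard.le).antisymm
        ((hS Y).trans (mk_le_mk_rootRestrict (hSR Y))),
      muWide_rootRestrict hrig.1 (hSR Y) (hml.le.trans (hS Y))⟩
  · rintro _ ⟨Y, rfl⟩ _ ⟨Y', rfl⟩ h
    exact hne Y Y' fun hY => h (hY ▸ rfl)
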